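/- In the small-separator Context-FTPL setup, fix a sequence (x^1,f^1),…,(x^T,f^T) of contexts x^τ ∈ 𝒳 and loss functions f^τ : {0,1}^K → ℝ. For each t, with the same perturbation draw, let π^t (respectively π^{t+1}) be the smallest (tie-breaking order) minimizer over π ∈ Π of Σ_{τ=1}^{t−1} f^τ(π(x^τ)) + Σ_{x ∈ X} ⟨π(x), ℓ_x⟩ (respectively the same sum including the term for τ = t). Then E[ f^t(π^t(x^t)) − f^t(π^{t+1}(x^t)) ] ≤ 4·ε·K·d·‖f^t‖_*², where the expectation is over the i.i.d. Laplace(ε) perturbation. (Lemma: Stability for small separator.) -/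

import Mathlib

open MeasureTheory Finset

/-- The i.i.d. product Laplace(ε) measure on `ι → ℝ`: density
`z ↦ ∏ i (ε/2)·exp(−ε|z i|)` with respect to Lebesgue measure. -/
noncomputable def laplacePi (ι : Type*) [Fintype ι] (ε : ℝ) :
    MeasureTheory.Measure (ι → ℝ) :=
  (MeasureTheory.volume : MeasureTheory.Measure (ι → ℝ)).withDensity
    fun z => ENNReal.ofReal (∏ i, ε / 2 * Real.exp (-ε * |z i|))

/-- `⟨a, v⟩` for `a ∈ {0,1}^K` (as a Boolean vector) and `v ∈ ℝ^K`. -/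
def dotp {K : ℕ} (a : Fin K → Bool) (v : Fin K → ℝ) : ℝ :=
  ∑ j, if a j then v j else 0

/-- `‖f‖_* = max_{a ∈ {0,1}^K} |f a|` for a loss function `f`. -/
noncomputable def dualNorm {K : ℕ} (f : (Fin K → Bool) → ℝ) : ℝ :=
  Finset.univ.sup' ⟨fun _ => false, Finset.mem_univ _⟩ fun a => |f a|

/-- The smallest (in the tie-breaking linear order) minimizer of `c` over the
finite nonempty policy set `P`. -/
noncomputable def argminTie {P : Type*} [Fintype P] [Nonempty P] [LinearOrder P]
    (c : P → ℝ) : P :=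
  haveI := Classical.decPred fun p : P => ∀ q, c p ≤ c q
  (Finset.univ.filter fun p : P => ∀ q, c p ≤ c q).min' (by
    obtain ⟨p, -, hp⟩ := Finset.exists_min_image (Finset.univ : Finset P) c
      ⟨Classical.arbitrary P, Finset.mem_univ _⟩
    exact ⟨p, Finset.mem_filter.mpr ⟨Finset.mem_univ _, fun q => hp q (Finset.mem_univ q)⟩⟩)

/-!
Write `B` and `A` for the perturbed leaders without and with the round-`t` loss. When `B ≠ A`
the separator yields a coordinate `(x, j)` on which `B(x)` and `A(x)` differ, so the loss
difference is at most `2‖f^t‖_*` times the number of coordinates of disagreement. Freeze all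
perturbation coordinates but `ℓ_x(j)`: as a function of `ℓ_x(j)`, the `(x, j)`-bit of a perturbed
leader is `1` below a threshold and `0` above it, and adding the loss `f^t` moves that threshold
by at most `2‖f^t‖_*`. Hence `B` and `A` disagree at `(x, j)` only if `ℓ_x(j)` lies in an interval
of length `2‖f^t‖_*`, an event of Laplace probability at most `ε‖f^t‖_*` because the density is
bounded by `ε / 2`. Summing over the `d K` coordinates gives `2 ε K d ‖f^t‖_*² ≤ 4 ε K d ‖f^t‖_*²`.
-/

open scoped ENNReal
open Real

namespace MeasureTheory

variable {ι : Type*} [Fintype ι] {X : ι → Type*} [∀ i, MeasurableSpace (X i)]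
  (μ : ∀ i, Measure (X i)) [∀ i, SigmaFinite (μ i)]

theorem lmarginal_prod_apply [DecidableEq ι] {f : ∀ i, X i → ℝ≥0∞} (hf : ∀ i, Measurable (f i))
    (s : Finset ι) (x : ∀ i, X i) :
    (∫⋯∫⁻_s, (fun y => ∏ i, f i (y i)) ∂μ) x =
      ∏ i, if i ∈ s then ∫⁻ t, f i t ∂μ i else f i (x i) := by
  induction s using Finset.induction generalizing x with
  | empty => simp
  | insert i s hi ih =>
    have hmeas : Measurable fun y : ∀ i, X i => ∏ i, f i (y i) :=
      Finset.measurable_prod _ fun i _ => (hf i).comp (measurable_pi_apply i)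
    rw [lmarginal_insert _ hmeas hi]
    simp_rw [ih, ← Finset.mul_prod_erase univ _ (mem_univ i), Function.update_self, if_neg hi]
    have hrest : ∀ xᵢ, (∏ j ∈ univ.erase i,
        if j ∈ s then ∫⁻ t, f j t ∂μ j else f j (Function.update x i xᵢ j)) =
          ∏ j ∈ univ.erase i, if j ∈ insert i s then ∫⁻ t, f j t ∂μ j else f j (x j) := by
      intro xᵢ
      refine Finset.prod_congr rfl fun j hj => ?_
      have hji : j ≠ i := Finset.ne_of_mem_erase hj
      simp [hji]
    simp_rw [hrest, lintegral_mul_const _ (hf i), if_pos (mem_insert_self i s)]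

theorem lintegral_fintype_prod_eq_prod {f : ∀ i, X i → ℝ≥0∞} (hf : ∀ i, Measurable (f i)) :
    ∫⁻ x, ∏ i, f i (x i) ∂Measure.pi μ = ∏ i, ∫⁻ t, f i t ∂μ i := by
  classical
  cases isEmpty_or_nonempty (∀ i, X i) with
  | inl h =>
    obtain ⟨i, hi⟩ := isEmpty_pi.mp h
    rw [lintegral_of_isEmpty, Finset.prod_eq_zero (mem_univ i) (lintegral_of_isEmpty _ _)]
  | inr h =>
    obtain ⟨x⟩ := h
    simpa using lmarginal_prod_apply μ hf univ x

theorem Measure.pi_withDensity {f : ∀ i, X i → ℝ≥0∞} (hf : ∀ i, Measurable (f i))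
    [∀ i, SigmaFinite ((μ i).withDensity (f i))] :
    Measure.pi (fun i => (μ i).withDensity (f i)) =
      (Measure.pi μ).withDensity fun x => ∏ i, f i (x i) := by
  refine Measure.pi_eq fun s hs => ?_
  rw [withDensity_apply _ (MeasurableSet.univ_pi hs), Measure.restrict_pi_pi,
    lintegral_fintype_prod_eq_prod _ hf]
  exact Finset.prod_congr rfl fun i _ => (withDensity_apply _ (hs i)).symm

theorem Measure.pi_le_of_forall_slice_le [DecidableEq ι] [∀ i, IsProbabilityMeasure (μ i)]
    {D : Set (∀ i, X i)} (hD : MeasurableSet D) (i : ι) {C : ℝ≥0∞}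
    (hC : ∀ x, μ i {t | Function.update x i t ∈ D} ≤ C) :
    Measure.pi μ D ≤ C := by
  obtain rfl | ⟨x, -⟩ := D.eq_empty_or_nonempty
  · simp
  have hslice : ∫⋯∫⁻_{i}, D.indicator 1 ∂μ ≤ ∫⋯∫⁻_{i}, (fun _ => C) ∂μ := by
    intro y
    have hDy : MeasurableSet {t | Function.update y i t ∈ D} := measurable_update y hD
    simp only [lmarginal_singleton, lintegral_const, measure_univ, mul_one]
    exact (lintegral_indicator_one hDy).trans_le (hC y)
  have := lmarginal_le_of_subset (subset_univ {i}) (measurable_one.indicator hD)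
    measurable_const hslice x
  simpa [lintegral_indicator_one hD] using this

end MeasureTheory

noncomputable def laplacePDFReal (ε x : ℝ) : ℝ := ε / 2 * exp (-ε * |x|)

noncomputable def laplaceReal (ε : ℝ) : Measure ℝ :=
  volume.withDensity fun x => ENNReal.ofReal (laplacePDFReal ε x)

section Laplace

variable {ε : ℝ}

theorem integral_laplacePDFReal (hε : 0 < ε) : ∫ x, laplacePDFReal ε x = 1 := by
  unfold laplacePDFReal
  rw [integral_comp_abs (f := fun y => ε / 2 * exp (-ε * y)),
    integral_const_mul, integral_exp_mul_Ioi (neg_neg_of_pos hε), mul_zero, exp_zero]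
  field_simp

theorem isProbabilityMeasure_laplaceReal (hε : 0 < ε) :
    IsProbabilityMeasure (laplaceReal ε) := by
  have hint : Integrable (laplacePDFReal ε) :=
    .of_integral_ne_zero (by simp [integral_laplacePDFReal hε])
  constructor
  rw [laplaceReal, withDensity_apply _ MeasurableSet.univ, Measure.restrict_univ,
    ← ofReal_integral_eq_lintegral_ofReal hint
      (.of_forall fun x => by unfold laplacePDFReal; positivity),
    integral_laplacePDFReal hε, ENNReal.ofReal_one]

theorem laplacePDFReal_le (hε : 0 ≤ ε) (x : ℝ) : laplacePDFReal ε x ≤ ε / 2 := by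
  unfold laplacePDFReal
  exact mul_le_of_le_one_right (by positivity)
    (exp_le_one_iff.mpr (mul_nonpos_of_nonpos_of_nonneg (neg_nonpos.mpr hε) (abs_nonneg x)))

theorem laplaceReal_Icc_le (hε : 0 ≤ ε) (a b : ℝ) :
    laplaceReal ε (Set.Icc a b) ≤ ENNReal.ofReal (ε / 2 * (b - a)) := by
  rw [laplaceReal, withDensity_apply _ measurableSet_Icc]
  calc ∫⁻ x in Set.Icc a b, ENNReal.ofReal (laplacePDFReal ε x)
      ≤ ∫⁻ _ in Set.Icc a b, ENNReal.ofReal (ε / 2) :=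
        lintegral_mono fun x => ENNReal.ofReal_le_ofReal (laplacePDFReal_le hε x)
    _ = ENNReal.ofReal (ε / 2 * (b - a)) := by
        rw [setLIntegral_const, Real.volume_Icc, ← ENNReal.ofReal_mul (by positivity)]

theorem laplacePi_eq_pi (ι : Type*) [Fintype ι] (hε : 0 ≤ ε) :
    laplacePi ι ε = Measure.pi fun _ : ι => laplaceReal ε := by
  have hmeas : Measurable (laplacePDFReal ε) := by unfold laplacePDFReal; fun_prop
  rw [laplaceReal, Measure.pi_withDensity (fun _ => volume) fun _ => hmeas.ennreal_ofReal,
    ← volume_pi, laplacePi]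
  congr with z
  rw [ENNReal.ofReal_prod_of_nonneg fun i _ => by positivity]
  rfl

end Laplace

theorem Finset.abs_inf'_sub_inf'_le {α : Type*} {S : Finset α} (hS : S.Nonempty)
    {a a' : α → ℝ} {G : ℝ} (h : ∀ p ∈ S, |a' p - a p| ≤ G) :
    |S.inf' hS a' - S.inf' hS a| ≤ G := by
  obtain ⟨p, hp, hpa⟩ := S.exists_mem_eq_inf' hS a
  obtain ⟨p', hp', hpa'⟩ := S.exists_mem_eq_inf' hS a'
  have h₁ := S.inf'_le a hp'
  have h₂ := S.inf'_le a' hp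
  have h₃ := abs_le.mp (h p hp)
  have h₄ := abs_le.mp (h p' hp')
  rw [abs_le]
  constructor <;> linarith

section ArgminTie

variable {P : Type*} [Fintype P] [Nonempty P] [LinearOrder P]

theorem argminTie_le (c : P → ℝ) : ∀ q, c (argminTie c) ≤ c q := by
  unfold argminTie
  -- the filter in `argminTie` is decided by `Classical.decPred`, so that instance is spelled out
  exact ((@Finset.mem_filter P (fun p => ∀ q, c p ≤ c q) (Classical.decPred _) _ _).mp
    (Finset.min'_mem _ _)).2

theorem argminTie_le_of_forall_le {c : P → ℝ} {p : P} (hp : ∀ q, c p ≤ c q) :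
    argminTie c ≤ p := by
  unfold argminTie
  exact Finset.min'_le _ _ (by simpa using hp)

theorem argminTie_eq_iff {c : P → ℝ} {p : P} :
    argminTie c = p ↔ (∀ q, c p ≤ c q) ∧ ∀ p', (∀ q, c p' ≤ c q) → p ≤ p' := by
  refine ⟨?_, fun ⟨hp, hle⟩ => le_antisymm (argminTie_le_of_forall_le hp)
    (hle _ (argminTie_le c))⟩
  rintro rfl
  exact ⟨argminTie_le c, fun _ => argminTie_le_of_forall_le⟩

theorem argminTie_mem_of_forall_lt {c : P → ℝ} {S : Set P} {p : P}
    (hlt : ∀ q ∉ S, c p < c q) : argminTie c ∈ S := by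
  by_contra h
  exact (hlt _ h).not_ge (argminTie_le c p)

theorem measurableSet_argminTie_eq {α : Type*} [MeasurableSpace α] {c : α → P → ℝ}
    (hc : ∀ p, Measurable fun z => c z p) (p : P) :
    MeasurableSet {z | argminTie (c z) = p} := by
  simp_rw [argminTie_eq_iff]
  measurability

theorem measurable_comp_argminTie {α β : Type*} [MeasurableSpace α] [MeasurableSpace β]
    {c : α → P → ℝ} (hc : ∀ p, Measurable fun z => c z p) (g : P → β) :
    Measurable fun z => g (argminTie (c z)) := by
  intro s _
  have hpre : (fun z => g (argminTie (c z))) ⁻¹' s = ⋃ p ∈ g ⁻¹' s, {z | argminTie (c z) = p} := by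
    ext; simp
  rw [hpre]
  exact .biUnion (Set.to_countable _) fun p _ => measurableSet_argminTie_eq hc p

variable (b : P → Bool)

theorem bool_argminTie_eq_true {a : P → ℝ} {s : ℝ} (h₁ : (univ.filter (b · = true)).Nonempty)
    (h₀ : (univ.filter (b · = false)).Nonempty)
    (hs : s < (univ.filter (b · = false)).inf' h₀ a - (univ.filter (b · = true)).inf' h₁ a) :
    b (argminTie fun p => a p + if b p then s else 0) = true := by
  obtain ⟨p, hp, hpa⟩ := Finset.exists_mem_eq_inf' h₁ a
  refine argminTie_mem_of_forall_lt (S := {p | b p = true}) (p := p) fun q hq => ?_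
  have hq : b q = false := by simpa using hq
  have := Finset.inf'_le a (s := univ.filter (b · = false)) (by simpa using hq)
  simp only [(Finset.mem_filter.mp hp).2, hq, Bool.false_eq_true, if_true, if_false, add_zero]
  linarith

theorem bool_argminTie_eq_false {a : P → ℝ} {s : ℝ} (h₁ : (univ.filter (b · = true)).Nonempty)
    (h₀ : (univ.filter (b · = false)).Nonempty)
    (hs : (univ.filter (b · = false)).inf' h₀ a - (univ.filter (b · = true)).inf' h₁ a < s) :
    b (argminTie fun p => a p + if b p then s else 0) = false := by
  obtain ⟨p, hp, hpa⟩ := Finset.exists_mem_eq_inf' h₀ a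
  refine argminTie_mem_of_forall_lt (S := {p | b p = false}) (p := p) fun q hq => ?_
  have hq : b q = true := by simpa using hq
  have := Finset.inf'_le a (s := univ.filter (b · = true)) (by simpa using hq)
  simp only [(Finset.mem_filter.mp hp).2, hq, Bool.false_eq_true, if_true, if_false, add_zero]
  linarith

theorem exists_Icc_superset_setOf_bool_argminTie_ne {a a' : P → ℝ} {G : ℝ}
    (h : ∀ p, |a' p - a p| ≤ G) :
    ∃ l, {s : ℝ | b (argminTie fun p => a p + if b p then s else 0) ≠
      b (argminTie fun p => a' p + if b p then s else 0)} ⊆ Set.Icc l (l + 2 * G) := by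
  by_cases hb : (univ.filter (b · = true)).Nonempty ∧ (univ.filter (b · = false)).Nonempty
  swap
  · refine ⟨0, fun s hs => (hs ?_).elim⟩
    simp only [not_and_or, Finset.not_nonempty_iff_eq_empty, filter_eq_empty_iff] at hb
    rcases hb with hb | hb <;> simp [hb]
  obtain ⟨h₁, h₀⟩ := hb
  set θ := fun c : P → ℝ =>
    (univ.filter (b · = false)).inf' h₀ c - (univ.filter (b · = true)).inf' h₁ c
  have hθ : |θ a' - θ a| ≤ 2 * G := by
    have e₀ := abs_le.mp (abs_inf'_sub_inf'_le h₀ fun p _ => h p)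
    have e₁ := abs_le.mp (abs_inf'_sub_inf'_le h₁ fun p _ => h p)
    rw [abs_le]
    constructor <;> linarith
  refine ⟨min (θ a) (θ a'), fun s hs => ⟨not_lt.mp fun hlt => hs ?_, not_lt.mp fun hlt => hs ?_⟩⟩
  · rw [lt_min_iff] at hlt
    rw [bool_argminTie_eq_true b h₁ h₀ hlt.1, bool_argminTie_eq_true b h₁ h₀ hlt.2]
  · have hlt : max (θ a) (θ a') < s := by linarith [max_sub_min_eq_abs (θ a) (θ a')]
    rw [max_lt_iff] at hlt
    rw [bool_argminTie_eq_false b h₁ h₀ hlt.1, bool_argminTie_eq_false b h₁ h₀ hlt.2]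

end ArgminTie

def boolDot {ι : Type*} [Fintype ι] (b : ι → Bool) (z : ι → ℝ) : ℝ :=
  ∑ i, if b i then z i else 0

section BoolDot

variable {ι : Type*} [Fintype ι]

theorem measurable_boolDot (b : ι → Bool) : Measurable (boolDot b) :=
  Finset.measurable_sum _ fun i _ => by split_ifs <;> fun_prop

theorem boolDot_update [DecidableEq ι] (b : ι → Bool) (z : ι → ℝ) (i : ι) (s : ℝ) :
    boolDot b (Function.update z i s) =
      boolDot b (Function.update z i 0) + if b i then s else 0 := by
  unfold boolDot
  rw [← sub_eq_iff_eq_add', ← Finset.sum_sub_distrib,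
    Finset.sum_eq_single i (fun j _ hj => by simp [hj]) (by simp)]
  simp

theorem sum_dotp_eq_boolDot {α : Type*} [Fintype α] {K : ℕ} (g : α → Fin K → Bool)
    (z : α × Fin K → ℝ) :
    ∑ a, dotp (g a) (fun j => z (a, j)) = boolDot (fun w => g w.1 w.2) z :=
  (Fintype.sum_prod_type fun w : α × Fin K => if g w.1 w.2 then z w else 0).symm

theorem sub_le_sum_ite_ne_of_injective {P : Type*} {φ : P → ι → Bool}
    (hφ : Function.Injective φ) {h : P → ℝ} {F : ℝ} (hh : ∀ p, |h p| ≤ F) (p q : P) :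
    h p - h q ≤ ∑ i, if φ p i ≠ φ q i then 2 * F else 0 := by
  have hF : 0 ≤ F := (abs_nonneg _).trans (hh p)
  obtain rfl | hpq := eq_or_ne p q
  · simp
  obtain ⟨i, hi⟩ := Function.ne_iff.mp (hφ.ne hpq)
  calc h p - h q ≤ 2 * F := by linarith [abs_le.mp (hh p), abs_le.mp (hh q)]
    _ = if φ p i ≠ φ q i then 2 * F else 0 := (if_pos hi).symm
    _ ≤ _ := Finset.single_le_sum (f := fun j => if φ p j ≠ φ q j then 2 * F else 0)
        (fun j _ => by split_ifs <;> linarith) (mem_univ i)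

end BoolDot

noncomputable def perturbedLeader {P ι : Type*} [Fintype P] [Nonempty P] [LinearOrder P]
    [Fintype ι] (φ : P → ι → Bool) (L : P → ℝ) (z : ι → ℝ) : P :=
  argminTie fun p => L p + boolDot (φ p) z

section PerturbedLeader

variable {P ι : Type*} [Fintype P] [Nonempty P] [LinearOrder P] [Fintype ι] (φ : P → ι → Bool)

theorem measurable_comp_perturbedLeader {β : Type*} [MeasurableSpace β] (L : P → ℝ)
    (g : P → β) : Measurable fun z => g (perturbedLeader φ L z) :=
  measurable_comp_argminTie (fun p => (measurable_boolDot (φ p)).const_add (L p)) g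

theorem exists_Icc_superset_setOf_perturbedLeader_ne [DecidableEq ι] {L L' : P → ℝ} {G : ℝ}
    (hL : ∀ p, |L' p - L p| ≤ G) (z : ι → ℝ) (i : ι) :
    ∃ l, {s : ℝ | φ (perturbedLeader φ L (Function.update z i s)) i ≠
      φ (perturbedLeader φ L' (Function.update z i s)) i} ⊆ Set.Icc l (l + 2 * G) := by
  have hupdate : ∀ L (s : ℝ), perturbedLeader φ L (Function.update z i s) =
      argminTie fun p =>
        (L p + boolDot (φ p) (Function.update z i 0)) + if φ p i then s else 0 := by
    intro L s
    simp only [perturbedLeader, add_assoc, ← boolDot_update]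
  simp only [hupdate]
  exact exists_Icc_superset_setOf_bool_argminTie_ne (fun p => φ p i) fun p => by simpa using hL p

theorem pi_setOf_perturbedLeader_ne_le [DecidableEq ι] {ν : Measure ℝ} [IsProbabilityMeasure ν]
    {L L' : P → ℝ} {G : ℝ} (hL : ∀ p, |L' p - L p| ≤ G) {C : ℝ≥0∞}
    (hν : ∀ l, ν (Set.Icc l (l + 2 * G)) ≤ C) (i : ι) :
    Measure.pi (fun _ : ι => ν)
      {z | φ (perturbedLeader φ L z) i ≠ φ (perturbedLeader φ L' z) i} ≤ C := by
  refine Measure.pi_le_of_forall_slice_le _ (measurableSet_eq_fun ?_ ?_).compl i fun z => ?_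
  · exact measurable_comp_perturbedLeader φ L (φ · i)
  · exact measurable_comp_perturbedLeader φ L' (φ · i)
  obtain ⟨l, hl⟩ := exists_Icc_superset_setOf_perturbedLeader_ne φ hL z i
  exact (measure_mono hl).trans (hν l)

theorem integral_sub_perturbedLeader_le [DecidableEq ι] (hφ : Function.Injective φ)
    {ν : Measure ℝ} [IsProbabilityMeasure ν] {L L' : P → ℝ} {G δ : ℝ}
    (hL : ∀ p, |L' p - L p| ≤ G) (hν : ∀ l, ν.real (Set.Icc l (l + 2 * G)) ≤ δ)
    {h : P → ℝ} {F : ℝ} (hh : ∀ p, |h p| ≤ F) :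
    ∫ z, (h (perturbedLeader φ L z) - h (perturbedLeader φ L' z)) ∂Measure.pi (fun _ : ι => ν) ≤
      Fintype.card ι * (2 * F * δ) := by
  set μ := Measure.pi fun _ : ι => ν
  set D : ι → Set (ι → ℝ) :=
    fun i => {z | φ (perturbedLeader φ L z) i ≠ φ (perturbedLeader φ L' z) i}
  have hF : 0 ≤ F := (abs_nonneg _).trans (hh (Classical.arbitrary P))
  have hδ : 0 ≤ δ := measureReal_nonneg.trans (hν 0)
  have hD : ∀ i, MeasurableSet (D i) := fun i =>
    (measurableSet_eq_fun (measurable_comp_perturbedLeader φ L (φ · i))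
      (measurable_comp_perturbedLeader φ L' (φ · i))).compl
  have hμD : ∀ i, μ.real (D i) ≤ δ := fun i =>
    ENNReal.toReal_le_of_le_ofReal hδ <| pi_setOf_perturbedLeader_ne_le φ hL
      (fun l => (ENNReal.le_ofReal_iff_toReal_le (measure_ne_top _ _) hδ).mpr (hν l)) i
  have hint : ∀ L, Integrable (fun z => h (perturbedLeader φ L z)) μ := fun L =>
    .of_bound (measurable_comp_perturbedLeader φ L h).aestronglyMeasurable F
      (.of_forall fun z => (Real.norm_eq_abs _).trans_le (hh _))
  have hintD : ∀ i, Integrable ((D i).indicator fun _ => 2 * F) μ := fun i =>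
    (integrable_const _).indicator (hD i)
  calc ∫ z, (h (perturbedLeader φ L z) - h (perturbedLeader φ L' z)) ∂μ
      ≤ ∫ z, ∑ i, (D i).indicator (fun _ => 2 * F) z ∂μ :=
        integral_mono ((hint L).sub (hint L')) (integrable_finsetSum _ fun i _ => hintD i)
          fun z => by simpa [Set.indicator_apply, D] using sub_le_sum_ite_ne_of_injective hφ hh _ _
    _ = ∑ i, μ.real (D i) * (2 * F) := by
        rw [integral_finsetSum _ fun i _ => hintD i]
        simp [integral_indicator_const _ (hD _)]
    _ ≤ ∑ _i : ι, δ * (2 * F) :=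
        Finset.sum_le_sum fun i _ => mul_le_mul_of_nonneg_right (hμD i) (by positivity)
    _ = Fintype.card ι * (2 * F * δ) := by
        rw [Finset.sum_const, Finset.card_univ, nsmul_eq_mul]
        ring

end PerturbedLeader

theorem small_separator_stability_general
    {𝒳 : Type*} {P : Type*} [Fintype P] [Nonempty P] [LinearOrder P]
    {K d : ℕ}
    (Xs : Finset 𝒳) (hd : Xs.card = d)
    (pol : P → 𝒳 → Fin K → Bool)
    (hsep : ∀ p q : P, p ≠ q → ∃ x ∈ Xs, pol p x ≠ pol q x)
    {ε : ℝ} (hε : 0 < ε)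
    (xs : ℕ → 𝒳) (f : ℕ → (Fin K → Bool) → ℝ) (t : ℕ) :
    (∫ z, (f t (pol (argminTie fun p : P =>
            (∑ τ ∈ Finset.range t, f τ (pol p (xs τ))) +
              ∑ xc : {x // x ∈ Xs}, dotp (pol p ↑xc) fun j => z (xc, j)) (xs t)) -
          f t (pol (argminTie fun p : P =>
            (∑ τ ∈ Finset.range (t + 1), f τ (pol p (xs τ))) +
              ∑ xc : {x // x ∈ Xs}, dotp (pol p ↑xc) fun j => z (xc, j)) (xs t)))
        ∂(laplacePi ({x // x ∈ Xs} × Fin K) ε)) ≤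
      4 * ε * (K : ℝ) * (d : ℝ) * dualNorm (f t) ^ 2 := by
  classical
  set F := dualNorm (f t)
  have hF : ∀ a, |f t a| ≤ F := fun a => Finset.le_sup' (fun a => |f t a|) (mem_univ a)
  have hF₀ : 0 ≤ F := (abs_nonneg _).trans (hF fun _ => false)
  have hφ : Function.Injective fun p (w : {x // x ∈ Xs} × Fin K) => pol p w.1 w.2 := by
    intro p q hpq
    by_contra hne
    obtain ⟨x, hx, hpq'⟩ := hsep p q hne
    exact hpq' (funext fun j => congrFun hpq (⟨x, hx⟩, j))
  have hν : ∀ l, (laplaceReal ε).real (Set.Icc l (l + 2 * F)) ≤ ε * F := fun l =>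
    ENNReal.toReal_le_of_le_ofReal (by positivity) <|
      (laplaceReal_Icc_le hε.le _ _).trans_eq (by ring_nf)
  have := isProbabilityMeasure_laplaceReal hε
  simp only [sum_dotp_eq_boolDot]
  rw [laplacePi_eq_pi _ hε.le]
  refine (integral_sub_perturbedLeader_le _ hφ (h := fun p => f t (pol p (xs t)))
    (L := fun p => ∑ τ ∈ range t, f τ (pol p (xs τ)))
    (L' := fun p => ∑ τ ∈ range (t + 1), f τ (pol p (xs τ))) (fun p => ?_) hν
    fun p => hF _).trans ?_
  · simpa [Finset.sum_range_succ] using hF _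
  rw [Fintype.card_prod, Fintype.card_coe, Fintype.card_fin, hd]
  push_cast
  linarith [show 0 ≤ ε * K * d * F ^ 2 by positivity]

/-- **Stability for small separator.** `𝒳` is an arbitrary context set, `P`
the finite set of `N ≥ 2` policies (with tie-breaking linear order), each
choosing at most `m` of the `K` coordinates, and `Xs ⊆ 𝒳` is a separator of
size `d`: any two distinct policies differ on some context of `Xs`.  The
perturbation places i.i.d. Laplace(ε) losses on the contexts of `Xs`.  For any
sequence of contexts and loss functions and any round `t < T`,
`E[f^t(π^t(x^t)) − f^t(π^{t+1}(x^t))] ≤ 4·ε·K·d·‖f^t‖_*²`. -/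
theorem small_separator_stability
    {𝒳 : Type*} {P : Type*} [Fintype P] [Nonempty P] [LinearOrder P]
    {K m d N : ℕ} (hK : 1 ≤ K) (hm : 1 ≤ m)
    (Xs : Finset 𝒳) (hd : Xs.card = d)
    (hN : Fintype.card P = N) (hN2 : 2 ≤ N)
    (pol : P → 𝒳 → Fin K → Bool)
    (hsparse : ∀ p x, (Finset.univ.filter fun j => pol p x j = true).card ≤ m)
    (hsep : ∀ p q : P, p ≠ q → ∃ x ∈ Xs, pol p x ≠ pol q x)
    {ε : ℝ} (hε : 0 < ε)
    (T : ℕ) (xs : ℕ → 𝒳) (f : ℕ → (Fin K → Bool) → ℝ) (t : ℕ) (ht : t < T) :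
    (∫ z, (f t (pol (argminTie fun p : P =>
            (∑ τ ∈ Finset.range t, f τ (pol p (xs τ))) +
              ∑ xc : {x // x ∈ Xs}, dotp (pol p ↑xc) fun j => z (xc, j)) (xs t)) -
          f t (pol (argminTie fun p : P =>
            (∑ τ ∈ Finset.range (t + 1), f τ (pol p (xs τ))) +
              ∑ xc : {x // x ∈ Xs}, dotp (pol p ↑xc) fun j => z (xc, j)) (xs t)))
        ∂(laplacePi ({x // x ∈ Xs} × Fin K) ε)) ≤
      4 * ε * (K : ℝ) * (d : ℝ) * dualNorm (f t) ^ 2 :=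
  small_separator_stability_general Xs hd pol hsep hε xs f t
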